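/- Let (R, m) be a Cohen-Macaulay local ring of dimension one in which every m-primary ideal has a principal reduction, and let I be a regular ideal of R. If I is a partial trace ideal of I (i.e. ℓ_R(R/I) = h(I)), then R : I ⊆ R̄, i.e. every α in the total quotient ring Q(R) with αI ⊆ R is integral over R. -/

import Mathlib

/-- The length of an `R`-module `M`: the supremum of lengths of strictly
increasing chains of submodules of `M`, valued in `ℕ∞`. -/
noncomputable def modLength (R M : Type*) [CommRing R] [AddCommGroup M] [Module R M] : ℕ∞ :=
  ⨆ s : RelSeries {(x, y) : Submodule R M × Submodule R M | x < y}, (s.length : ℕ∞)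

/-- `h(M) = inf { ℓ_R(R/Im f) : f ∈ Hom_R(M,R) }`. -/
noncomputable def hInv (R M : Type*) [CommRing R] [AddCommGroup M] [Module R M] : ℕ∞ :=
  ⨅ f : M →ₗ[R] R, modLength R (R ⧸ LinearMap.range f)

/-!
Pick a regular `a ∈ I` and put `E = (a) : I`; then `b = αa ∈ E`, and `E` is `m`-primary
(or `R`), so it has a principal reduction `e`, say `E^{n+1} = e E^n`. Multiplication by `e/a`
is a map `f : I → R` with `a · f(I) = e I`, so the minimality `ℓ(R/I) ≤ ℓ(R/f(I))` together
with `ℓ(R/uJ) = ℓ(R/u) + ℓ(R/J)` for regular `u` gives `ℓ(R/a) ≤ ℓ(R/e)`. Since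
`a E^n ⊆ E^{n+1} = e E^n`, comparing colengths forces `a E^n = e E^n`, hence `b E^n ⊆ a E^n`:
`α` stabilises the finitely generated fractional ideal `E^n`, which contains the unit `e^n`,
so `α` is integral.
-/

open scoped nonZeroDivisors
open Ideal

theorem modLength_eq_length (R M : Type*) [CommRing R] [AddCommGroup M] [Module R M] :
    modLength R M = Module.length R M := by
  apply WithBot.coe_injective
  rw [Module.coe_length, Order.krullDim_eq_iSup_length, modLength]

theorem isIntegral_of_forall_mul_mem {R A : Type*} [CommRing R] [IsNoetherianRing R] [CommRing A]
    [Algebra R A] {N : Submodule R A} (hN : N.FG) {u : A} (hu : IsUnit u) (huN : u ∈ N) {x : A}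
    (hx : ∀ n ∈ N, x * n ∈ N) : IsIntegral R x := by
  have hS : ∀ y ∈ Algebra.adjoin R {x}, ∀ n ∈ N, y * n ∈ N := by
    intro y hy
    induction hy using Algebra.adjoin_induction with
    | mem y hy => exact (Set.mem_singleton_iff.mp hy) ▸ hx
    | algebraMap r => exact fun n hn => (Algebra.smul_def r n) ▸ N.smul_mem r hn
    | add y z _ _ hy hz => exact fun n hn => (add_mul y z n).symm ▸ N.add_mem (hy n hn) (hz n hn)
    | mul y z _ _ hy hz => exact fun n hn => (mul_assoc y z n).symm ▸ hy _ (hz n hn)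
  -- `y ↦ y * u` embeds `R[x]` into `N`, so `R[x]` is a finite `R`-module.
  refine .of_mem_of_fg _ ((hN.map (LinearMap.mulRight R ↑hu.unit⁻¹)).of_le fun y hy => ?_) x
    (Algebra.self_mem_adjoin_singleton R x)
  exact ⟨y * u, hS y hy u huN, by simp [mul_assoc]⟩

section Colength

variable {R : Type*} [CommRing R]

theorem Ideal.krullDimLE_zero_quotient (hdim : ringKrullDim R ≤ 1) {J : Ideal R} {w : R}
    (hw : w ∈ R⁰) (hwJ : w ∈ J) : Ring.KrullDimLE 0 (R ⧸ J) := by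
  have := ringKrullDim_succ_le_of_surjective (Ideal.Quotient.mk J) Ideal.Quotient.mk_surjective hw
    (Ideal.Quotient.eq_zero_iff_mem.mpr hwJ)
  rw [Ring.krullDimLE_iff, ← ENat.WithBot.add_le_add_one_right_iff]
  exact this.trans (by simpa using hdim)

theorem Ideal.IsPrime.isMaximal_of_mem_nonZeroDivisors (hdim : ringKrullDim R ≤ 1) {p : Ideal R}
    (hp : p.IsPrime) {w : R} (hw : w ∈ R⁰) (hwp : w ∈ p) : p.IsMaximal :=
  have := krullDimLE_zero_quotient hdim hw hwp
  Quotient.maximal_of_isField _ Ring.KrullDimLE.isField_of_isDomain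

theorem Ideal.radical_eq_maximalIdeal_of_mem_nonZeroDivisors [IsLocalRing R]
    (hdim : ringKrullDim R ≤ 1) {J : Ideal R} (hJ : J ≠ ⊤) {w : R} (hw : w ∈ R⁰)
    (hwJ : w ∈ J) :
    J.radical = IsLocalRing.maximalIdeal R := by
  refine (IsLocalRing.le_maximalIdeal (by rwa [Ne, radical_eq_top])).antisymm ?_
  rw [radical_eq_sInf]
  refine le_sInf fun p ⟨hJp, hp⟩ => ?_
  exact (IsLocalRing.eq_maximalIdeal (hp.isMaximal_of_mem_nonZeroDivisors hdim hw (hJp hwJ))).ge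

theorem Ideal.length_quotient_ne_top [IsNoetherianRing R] (hdim : ringKrullDim R ≤ 1)
    {J : Ideal R} {w : R} (hw : w ∈ R⁰) (hwJ : w ∈ J) :
    Module.length R (R ⧸ J) ≠ ⊤ := by
  have := krullDimLE_zero_quotient hdim hw hwJ
  have : IsArtinianRing (R ⧸ J) := IsNoetherianRing.isArtinianRing_of_krullDimLE_zero
  rw [Module.length_eq_of_surjective (S := R) (R := R ⧸ J) Quotient.mk_surjective]
  exact Module.length_ne_top

theorem Ideal.eq_of_le_of_length_quotient_le {J K : Ideal R} (h : J ≤ K)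
    (hJ : Module.length R (R ⧸ J) ≠ ⊤)
    (hle : Module.length R (R ⧸ J) ≤ Module.length R (R ⧸ K)) : J = K := by
  rw [Module.length_quotient, Module.length_quotient] at *
  by_contra hne
  have hK := (Order.coheight_anti h).trans_lt hJ.lt_top
  exact (Order.coheight_strictAnti (h.lt_of_ne hne) hK).not_ge hle

theorem Ideal.length_quotient_span_singleton_mul {u : R} (hu : u ∈ R⁰) (J : Ideal R) :
    Module.length R (R ⧸ span {u} * J) =
      Module.length R (R ⧸ J) + Module.length R (R ⧸ span {u}) := by
  have hJ : J = Submodule.comap (LinearMap.mul R R u) (span {u} * J) := by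
    ext r
    simp only [Submodule.mem_comap, LinearMap.mul_apply', mem_span_singleton_mul,
      mul_cancel_left_mem_nonZeroDivisors hu, exists_eq_right]
  have hle : span {u} * J ≤ span {u} := mul_le_left
  -- `0 → R/J --u--> R/uJ → R/(u) → 0` is exact.
  refine Module.length_eq_add_of_exact (Submodule.mapQ J _ _ hJ.le) (Submodule.factor hle)
    ?_ (Submodule.factor_surjective hle) ?_
  · rw [← LinearMap.ker_eq_bot, Submodule.ker_mapQ, ← hJ, Submodule.mkQ_map_self]
  · rw [LinearMap.exact_iff, Submodule.ker_mapQ, Submodule.range_mapQ, Submodule.comap_id,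
      range_mul']

theorem Ideal.span_singleton_mul_eq_of_length_quotient_le [IsNoetherianRing R]
    (hdim : ringKrullDim R ≤ 1) {J : Ideal R} {w : R} (hw : w ∈ R⁰) (hwJ : w ∈ J) {a e : R}
    (ha : a ∈ R⁰) (he : e ∈ R⁰) (hle : span {a} * J ≤ span {e} * J)
    (hae : Module.length R (R ⧸ span {a}) ≤ Module.length R (R ⧸ span {e})) :
    span {a} * J = span {e} * J := by
  refine eq_of_le_of_length_quotient_le hle (length_quotient_ne_top hdim (mul_mem ha hw)
    (mul_mem_mul (mem_span_singleton_self a) hwJ)) ?_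
  rw [length_quotient_span_singleton_mul ha, length_quotient_span_singleton_mul he]
  gcongr

end Colength

section Reduction

variable {R : Type*} [CommRing R]

theorem Ideal.exists_pow_succ_eq_span_singleton_mul [IsLocalRing R] (hdim : ringKrullDim R ≤ 1)
    (hpr : ∀ J : Ideal R, J.radical = IsLocalRing.maximalIdeal R →
      ∃ a ∈ J, ∃ n : ℕ, 0 < n ∧ J ^ (n + 1) = span {a} * J ^ n)
    {E : Ideal R} {w : R} (hw : w ∈ R⁰) (hwE : w ∈ E) :
    ∃ e ∈ E, ∃ n : ℕ, E ^ (n + 1) = span {e} * E ^ n := by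
  by_cases hE : E = ⊤
  · exact ⟨1, hE ▸ Submodule.mem_top, 0, by simp [hE]⟩
  · obtain ⟨e, heE, n, -, hn⟩ :=
      hpr E (radical_eq_maximalIdeal_of_mem_nonZeroDivisors hdim hE hw hwE)
    exact ⟨e, heE, n, hn⟩

theorem Ideal.mem_nonZeroDivisors_of_pow_succ_eq {E : Ideal R} {e : R} {n : ℕ}
    (h : E ^ (n + 1) = span {e} * E ^ n) {w : R} (hw : w ∈ R⁰) (hwE : w ∈ E) :
    e ∈ R⁰ := by
  have hpow : w ^ (n + 1) ∈ span {e} := mul_le_left (h ▸ pow_mem_pow hwE (n + 1))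
  obtain ⟨c, hc⟩ := mem_span_singleton'.mp hpow
  exact (mul_mem_nonZeroDivisors.mp (hc ▸ pow_mem hw (n + 1))).2

end Reduction

section PartialTrace

variable {R : Type*} [CommRing R]

theorem Ideal.exists_mul_linearMap_eq {I : Ideal R} {a e : R} (ha : a ∈ R⁰)
    (he : e ∈ (span {a}).colon (I : Set R)) :
    ∃ f : I →ₗ[R] R, ∀ y : I, a * f y = e * y := by
  let g := LinearEquiv.ofInjective (LinearMap.mul R R a) fun r s h =>
    (mul_cancel_left_mem_nonZeroDivisors ha).mp h
  let h : I →ₗ[R] LinearMap.range (LinearMap.mul R R a) :=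
    ((LinearMap.mul R R e).comp I.subtype).codRestrict _ fun y => by
      rw [range_mul']
      exact Submodule.mem_colon.mp he y y.2
  exact ⟨g.symm.toLinearMap.comp h, fun y => congrArg Subtype.val (g.apply_symm_apply (h y))⟩

theorem Ideal.span_singleton_mul_range_eq {I : Ideal R} {a e : R} {f : I →ₗ[R] R}
    (hf : ∀ y : I, a * f y = e * y) : span {a} * LinearMap.range f = span {e} * I := by
  rw [span_singleton_mul_eq_span_singleton_mul]
  refine ⟨?_, fun y hy => ⟨f ⟨y, hy⟩, ⟨_, rfl⟩, hf ⟨y, hy⟩⟩⟩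
  rintro _ ⟨y, rfl⟩
  exact ⟨y, y.2, hf y⟩

theorem Ideal.length_quotient_span_singleton_le_of_eq_hInv [IsNoetherianRing R]
    (hdim : ringKrullDim R ≤ 1) {I : Ideal R} (hpt : modLength R (R ⧸ I) = hInv R I) {a e : R}
    (ha : a ∈ R⁰) (haI : a ∈ I) (he : e ∈ R⁰) (heE : e ∈ (span {a}).colon (I : Set R)) :
    Module.length R (R ⧸ span {a}) ≤ Module.length R (R ⧸ span {e}) := by
  obtain ⟨f, hf⟩ := exists_mul_linearMap_eq ha heE
  have heG : e ∈ LinearMap.range f := ⟨⟨a, haI⟩,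
    (mul_cancel_left_mem_nonZeroDivisors ha).mp ((hf ⟨a, haI⟩).trans (mul_comm e a))⟩
  have hIG : Module.length R (R ⧸ I) ≤ Module.length R (R ⧸ LinearMap.range f) := by
    rw [← modLength_eq_length, ← modLength_eq_length, hpt]
    exact iInf_le _ f
  have hsum := length_quotient_span_singleton_mul ha (LinearMap.range f)
  rw [span_singleton_mul_range_eq hf, length_quotient_span_singleton_mul he] at hsum
  refine (WithTop.add_le_add_iff_left (length_quotient_ne_top hdim he heG)).mp ?_
  exact hsum ▸ add_le_add_left hIG _

end PartialTrace

section FractionRing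

variable {R K : Type*} [CommRing R] [CommRing K] [Algebra R K] [IsFractionRing R K]

theorem mem_colon_of_algebraMap_eq_mul {I : Ideal R} {α : K}
    (hα : ∀ y ∈ I, ∃ r : R, algebraMap R K r = α * algebraMap R K y) {a b : R}
    (hb : algebraMap R K b = α * algebraMap R K a) : b ∈ (span {a}).colon (I : Set R) := by
  refine Submodule.mem_colon.mpr fun y hy => ?_
  obtain ⟨r, hr⟩ := hα y hy
  refine mem_span_singleton'.mpr ⟨r, IsFractionRing.injective R K ?_⟩
  simp only [smul_eq_mul, map_mul, hb, hr]
  ring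

theorem isIntegral_of_span_singleton_mul_le [IsNoetherianRing R] {J : Ideal R} {w : R}
    (hw : w ∈ R⁰) (hwJ : w ∈ J) {a b : R} (ha : a ∈ R⁰)
    (hab : span {b} * J ≤ span {a} * J)
    {α : K} (hα : algebraMap R K b = α * algebraMap R K a) : IsIntegral R α := by
  refine isIntegral_of_forall_mul_mem ((IsNoetherian.noetherian J).map (Algebra.linearMap R K))
    (IsLocalization.map_units K ⟨w, hw⟩) ⟨w, hwJ, rfl⟩ ?_
  rintro _ ⟨x, hx, rfl⟩
  obtain ⟨z, hz, hzx⟩ :=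
    mem_span_singleton_mul.mp (hab (mul_mem_mul (mem_span_singleton_self b) hx))
  refine ⟨z, hz, (IsLocalization.map_units K ⟨a, ha⟩).mul_left_cancel ?_⟩
  simp only [Algebra.linearMap_apply]
  rw [← map_mul, hzx, map_mul, hα]
  ring

end FractionRing

theorem stmt8_general (R : Type*) [CommRing R] [IsNoetherianRing R] [IsLocalRing R]
    (hdim : ringKrullDim R = 1)
    (hpr : ∀ J : Ideal R, J.radical = IsLocalRing.maximalIdeal R →
      ∃ a ∈ J, ∃ n : ℕ, 0 < n ∧ J ^ (n + 1) = Ideal.span {a} * J ^ n)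
    (I : Ideal R) (hreg : ∃ x ∈ I, x ∈ nonZeroDivisors R)
    (hpt : modLength R (R ⧸ I) = hInv R ↥I) :
    ∀ α : FractionRing R,
      (∀ y ∈ I, ∃ r : R,
        algebraMap R (FractionRing R) r = α * algebraMap R (FractionRing R) y) →
      α ∈ integralClosure R (FractionRing R) := by
  intro α hα
  obtain ⟨a, haI, ha⟩ := hreg
  obtain ⟨b, hb⟩ := hα a haI
  set E := (span {a}).colon (I : Set R)
  have haE : a ∈ E :=
    Submodule.mem_colon.mpr fun y _ => mul_mem_right y _ (mem_span_singleton_self a)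
  have hbE : b ∈ E := mem_colon_of_algebraMap_eq_mul hα hb
  obtain ⟨e, heE, n, hn⟩ := exists_pow_succ_eq_span_singleton_mul hdim.le hpr ha haE
  have he := mem_nonZeroDivisors_of_pow_succ_eq hn ha haE
  have hmul : ∀ c ∈ E, span {c} * E ^ n ≤ span {e} * E ^ n := fun c hc => by
    rw [← hn, pow_succ']
    exact mul_mono_left ((span_singleton_le_iff_mem _).mpr hc)
  have hEn : span {a} * E ^ n = span {e} * E ^ n :=
    span_singleton_mul_eq_of_length_quotient_le hdim.le (pow_mem he n) (pow_mem_pow heE n) ha he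
      (hmul a haE) (length_quotient_span_singleton_le_of_eq_hInv hdim.le hpt ha haI he heE)
  exact isIntegral_of_span_singleton_mul_le (pow_mem he n) (pow_mem_pow heE n) ha
    ((hmul b hbE).trans hEn.ge) hb

/-- Let `(R, m)` be a one-dimensional Cohen-Macaulay local ring in which
every `m`-primary ideal has a principal reduction, and let `I` be a regular ideal.  If `I`
is a partial trace ideal of itself (`ℓ_R(R/I) = h(I)`), then `R : I ⊆ R̄`: every
`α ∈ Q(R)` with `αI ⊆ R` is integral over `R`. -/
theorem stmt8 (R : Type*) [CommRing R] [IsNoetherianRing R] [IsLocalRing R]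
    (hdim : ringKrullDim R = 1)
    (hdepth : ∃ x ∈ IsLocalRing.maximalIdeal R, x ∈ nonZeroDivisors R)
    (hpr : ∀ J : Ideal R, J.radical = IsLocalRing.maximalIdeal R →
      ∃ a ∈ J, ∃ n : ℕ, 0 < n ∧ J ^ (n + 1) = Ideal.span {a} * J ^ n)
    (I : Ideal R) (hreg : ∃ x ∈ I, x ∈ nonZeroDivisors R)
    (hpt : modLength R (R ⧸ I) = hInv R ↥I) :
    ∀ α : FractionRing R,
      (∀ y ∈ I, ∃ r : R,
        algebraMap R (FractionRing R) r = α * algebraMap R (FractionRing R) y) →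
      α ∈ integralClosure R (FractionRing R) :=
  stmt8_general R hdim hpr I hreg hpt
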